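/- (Circumquadrance dihedral spread theorem) Let A0, A1, A2, A3 be points of F³ whose difference vectors A1−A0, A2−A0, A3−A0 are linearly independent, and suppose the four B-quadreas 𝒜012, 𝒜013, 𝒜023, 𝒜123 are all nonzero. Let C be a point with Q(C,A_0) = Q(C,A_1) = Q(C,A_2) = Q(C,A_3) (a B-circumcentre), and let R = Q(C,A_0) be the B-circumquadrance. Then (𝒜012·𝒜013·𝒜023·𝒜123)² · A(E01·E23, E02·E13, E03·E12) = 1024·𝒱⁵·R. -/
import Mathlib


open Matrix

/-- The `B`-scalar product of two vectors in `F³`: `u ·_B v = u B vᵀ`. -/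
def bdot {F : Type*} [Field F] (B : Matrix (Fin 3) (Fin 3) F) (u v : Fin 3 → F) : F :=
  u ⬝ᵥ B.mulVec v

/-- The `B`-quadrance of two points: `Q(X,Y) = (Y−X)·_B(Y−X)`. -/
def quadrance {F : Type*} [Field F] (B : Matrix (Fin 3) (Fin 3) F) (X Y : Fin 3 → F) : F :=
  bdot B (Y - X) (Y - X)

/-- Archimedes's function `A(a,b,c) = (a+b+c)² − 2(a²+b²+c²)`. -/
def archi {F : Type*} [Field F] (a b c : F) : F :=
  (a + b + c) ^ 2 - 2 * (a ^ 2 + b ^ 2 + c ^ 2)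

/-- The `B`-quadrea of the triangle `XYZ`: `A(Q(X,Y), Q(X,Z), Q(Y,Z))`. -/
def quadrea {F : Type*} [Field F] (B : Matrix (Fin 3) (Fin 3) F) (X Y Z : Fin 3 → F) : F :=
  archi (quadrance B X Y) (quadrance B X Z) (quadrance B Y Z)

/-- The `B`-quadrume of the tetrahedron `A0A1A2A3`. -/
def quadrume {F : Type*} [Field F] (B : Matrix (Fin 3) (Fin 3) F)
    (A0 A1 A2 A3 : Fin 3 → F) : F :=
  (1 / 2) * Matrix.det
    !![2 * quadrance B A0 A1,
       quadrance B A0 A1 + quadrance B A0 A2 - quadrance B A1 A2,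
       quadrance B A0 A1 + quadrance B A0 A3 - quadrance B A1 A3;
       quadrance B A0 A1 + quadrance B A0 A2 - quadrance B A1 A2,
       2 * quadrance B A0 A2,
       quadrance B A0 A2 + quadrance B A0 A3 - quadrance B A2 A3;
       quadrance B A0 A1 + quadrance B A0 A3 - quadrance B A1 A3,
       quadrance B A0 A2 + quadrance B A0 A3 - quadrance B A2 A3,
       2 * quadrance B A0 A3]

section Aux
variable {F : Type*} [Field F] (B : Matrix (Fin 3) (Fin 3) F)

lemma bdot_comm (hB : B.IsSymm) (u v : Fin 3 → F) : bdot B u v = bdot B v u := by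
  unfold bdot
  rw [Matrix.dotProduct_mulVec, ← Matrix.mulVec_transpose, hB.eq, dotProduct_comm]

lemma bdot_add_left (u v p : Fin 3 → F) :
    bdot B (u + v) p = bdot B u p + bdot B v p := by
  simp [bdot, add_dotProduct]

lemma bdot_smul_left (x : F) (u p : Fin 3 → F) :
    bdot B (x • u) p = x * bdot B u p := by
  simp [bdot, smul_dotProduct]

lemma bdot_sub_left (u v p : Fin 3 → F) :
    bdot B (u - v) p = bdot B u p - bdot B v p := by
  simp [bdot, sub_dotProduct]

lemma bdot_sub_right (u v p : Fin 3 → F) :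
    bdot B p (u - v) = bdot B p u - bdot B p v := by
  simp [bdot, Matrix.mulVec_sub, dotProduct_sub]

lemma bdot_neg_neg (u : Fin 3 → F) : bdot B (-u) (-u) = bdot B u u := by
  simp [bdot, neg_dotProduct, Matrix.mulVec_neg, dotProduct_neg]

lemma bdot_expand (hB : B.IsSymm) (u v : Fin 3 → F) :
    bdot B (u - v) (u - v) = bdot B u u - 2 * bdot B u v + bdot B v v := by
  rw [bdot_sub_left, bdot_sub_right, bdot_sub_right, bdot_comm B hB v u]; ring

lemma key_identity (g11 g12 g13 g22 g23 g33 t0 t1 t2 R V : F)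
    (hc1 : 2*(t0*g11 + t1*g12 + t2*g13) = g11)
    (hc2 : 2*(t0*g12 + t1*g22 + t2*g23) = g22)
    (hc3 : 2*(t0*g13 + t1*g23 + t2*g33) = g33)
    (hR : 2*R = t0*g11 + t1*g22 + t2*g33)
    (hV : V = 4*(g11*g22*g33 + 2*g12*g13*g23 - g11*g23^2 - g22*g13^2 - g33*g12^2)) :
    archi (g11*(g22+g33-2*g23)) (g22*(g11+g33-2*g13)) (g33*(g11+g22-2*g12)) = 4*V*R := by
  subst hV
  unfold archi
  linear_combination
      ((-4)*(g11*(g22*g33-g23*g23) + g22*(g13*g23-g33*g12) + g33*(g12*g23-g22*g13))) * hc1 +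
      ((-4)*(g11*(g13*g23-g33*g12) + g22*(g11*g33-g13*g13) + g33*(g12*g13-g11*g23))) * hc2 +
      ((-4)*(g11*(g12*g23-g22*g13) + g22*(g12*g13-g11*g23) + g33*(g11*g22-g12*g12))) * hc3 +
      ((-8)*(g11*g22*g33 + 2*g12*g13*g23 - g11*g23^2 - g22*g13^2 - g33*g12^2)) * hR

lemma assembly (X Y Z V R P : F) (hP : P ≠ 0)
    (hkey : archi X Y Z = 4*V*R) :
    P^2 * archi (16*X*V^2/P) (16*Y*V^2/P) (16*Z*V^2/P) = 1024*V^5*R := by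
  calc P^2 * archi (16*X*V^2/P) (16*Y*V^2/P) (16*Z*V^2/P)
      = P^2 * ((16*V^2/P)^2 * archi X Y Z) := by unfold archi; ring
    _ = P^2 * ((16*V^2/P)^2 * (4*V*R)) := by rw [hkey]
    _ = 1024*V^5*R := by field_simp; ring

end Aux

/-- **Circumquadrance dihedral spread theorem.**
`(𝒜012·𝒜013·𝒜023·𝒜123)² · A(E01·E23, E02·E13, E03·E12) = 1024·𝒱⁵·R`. -/
theorem circumquadrance_dihedral_spread {F : Type*} [Field F]
    (h2 : (2 : F) ≠ 0) (h3 : (3 : F) ≠ 0)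
    (B : Matrix (Fin 3) (Fin 3) F) (hB : B.IsSymm) (hBdet : IsUnit B.det)
    (A0 A1 A2 A3 : Fin 3 → F)
    (hind : LinearIndependent F ![A1 - A0, A2 - A0, A3 - A0])
    (h012 : quadrea B A0 A1 A2 ≠ 0) (h013 : quadrea B A0 A1 A3 ≠ 0)
    (h023 : quadrea B A0 A2 A3 ≠ 0) (h123 : quadrea B A1 A2 A3 ≠ 0)
    (C : Fin 3 → F)
    (hC01 : quadrance B C A0 = quadrance B C A1)
    (hC02 : quadrance B C A0 = quadrance B C A2)
    (hC03 : quadrance B C A0 = quadrance B C A3)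
    (R : F) (hR : R = quadrance B C A0)
    (V : F) (hV : V = quadrume B A0 A1 A2 A3)
    (E01 E02 E03 E12 E13 E23 : F)
    (hE01 : E01 = 4 * quadrance B A0 A1 * V / (quadrea B A0 A1 A2 * quadrea B A0 A1 A3))
    (hE02 : E02 = 4 * quadrance B A0 A2 * V / (quadrea B A0 A1 A2 * quadrea B A0 A2 A3))
    (hE03 : E03 = 4 * quadrance B A0 A3 * V / (quadrea B A0 A1 A3 * quadrea B A0 A2 A3))
    (hE12 : E12 = 4 * quadrance B A1 A2 * V / (quadrea B A0 A1 A2 * quadrea B A1 A2 A3))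
    (hE13 : E13 = 4 * quadrance B A1 A3 * V / (quadrea B A0 A1 A3 * quadrea B A1 A2 A3))
    (hE23 : E23 = 4 * quadrance B A2 A3 * V / (quadrea B A0 A2 A3 * quadrea B A1 A2 A3)) :
    (quadrea B A0 A1 A2 * quadrea B A0 A1 A3 * quadrea B A0 A2 A3 * quadrea B A1 A2 A3) ^ 2 *
        archi (E01 * E23) (E02 * E13) (E03 * E12) = 1024 * V ^ 5 * R := by
  have hsym := bdot_comm B hB
  have hexp := bdot_expand B hB
  -- quadrance rewrites
  have hQ01 : quadrance B A0 A1 = bdot B (A1-A0) (A1-A0) := rfl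
  have hQ02 : quadrance B A0 A2 = bdot B (A2-A0) (A2-A0) := rfl
  have hQ03 : quadrance B A0 A3 = bdot B (A3-A0) (A3-A0) := rfl
  have hQ12 : quadrance B A1 A2 = bdot B (A2-A0) (A2-A0)
      - 2 * bdot B (A1-A0) (A2-A0) + bdot B (A1-A0) (A1-A0) := by
    show bdot B (A2-A1) (A2-A1) = _
    rw [← sub_sub_sub_cancel_right A2 A1 A0, hexp, hsym (A2-A0) (A1-A0)]
  have hQ13 : quadrance B A1 A3 = bdot B (A3-A0) (A3-A0)
      - 2 * bdot B (A1-A0) (A3-A0) + bdot B (A1-A0) (A1-A0) := by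
    show bdot B (A3-A1) (A3-A1) = _
    rw [← sub_sub_sub_cancel_right A3 A1 A0, hexp, hsym (A3-A0) (A1-A0)]
  have hQ23 : quadrance B A2 A3 = bdot B (A3-A0) (A3-A0)
      - 2 * bdot B (A2-A0) (A3-A0) + bdot B (A2-A0) (A2-A0) := by
    show bdot B (A3-A2) (A3-A2) = _
    rw [← sub_sub_sub_cancel_right A3 A2 A0, hexp, hsym (A3-A0) (A2-A0)]
  -- circumcentre conditions
  have hCA0 : quadrance B C A0 = bdot B (C-A0) (C-A0) := by
    show bdot B (A0-C) (A0-C) = _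
    rw [← neg_sub C A0, bdot_neg_neg]
  have hcirc : ∀ Ai, quadrance B C Ai = bdot B ((Ai-A0)-(C-A0)) ((Ai-A0)-(C-A0)) := by
    intro Ai
    show bdot B (Ai-C) (Ai-C) = _
    rw [sub_sub_sub_cancel_right]
  have hc1 : 2 * bdot B (A1-A0) (C-A0) = bdot B (A1-A0) (A1-A0) := by
    have h := hC01
    rw [hCA0, hcirc A1, hexp (A1-A0) (C-A0)] at h
    linear_combination h
  have hc2 : 2 * bdot B (A2-A0) (C-A0) = bdot B (A2-A0) (A2-A0) := by
    have h := hC02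
    rw [hCA0, hcirc A2, hexp (A2-A0) (C-A0)] at h
    linear_combination h
  have hc3 : 2 * bdot B (A3-A0) (C-A0) = bdot B (A3-A0) (A3-A0) := by
    have h := hC03
    rw [hCA0, hcirc A3, hexp (A3-A0) (C-A0)] at h
    linear_combination h
  -- decomposition of C - A0 in the basis
  have hspan : Submodule.span F (Set.range ![A1 - A0, A2 - A0, A3 - A0]) = ⊤ :=
    hind.span_eq_top_of_card_eq_finrank (by simp [Module.finrank_fin_fun])
  have hmem : (C - A0) ∈ Submodule.span F (Set.range ![A1 - A0, A2 - A0, A3 - A0]) := by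
    rw [hspan]; trivial
  obtain ⟨t, ht⟩ := (Submodule.mem_span_range_iff_exists_fun F).1 hmem
  rw [Fin.sum_univ_three] at ht
  simp only [Matrix.cons_val_zero, Matrix.cons_val_one, Matrix.head_cons,
    Matrix.cons_val_two, Matrix.tail_cons] at ht
  -- scalar products of C - A0 with the basis vectors
  have hw1 : bdot B (A1-A0) (C-A0) = t 0 * bdot B (A1-A0) (A1-A0)
      + t 1 * bdot B (A1-A0) (A2-A0) + t 2 * bdot B (A1-A0) (A3-A0) := by
    rw [hsym (A1-A0) (C-A0), ← ht, bdot_add_left, bdot_add_left,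
      bdot_smul_left, bdot_smul_left, bdot_smul_left,
      hsym (A2-A0) (A1-A0), hsym (A3-A0) (A1-A0)]
  have hw2 : bdot B (A2-A0) (C-A0) = t 0 * bdot B (A1-A0) (A2-A0)
      + t 1 * bdot B (A2-A0) (A2-A0) + t 2 * bdot B (A2-A0) (A3-A0) := by
    rw [hsym (A2-A0) (C-A0), ← ht, bdot_add_left, bdot_add_left,
      bdot_smul_left, bdot_smul_left, bdot_smul_left, hsym (A3-A0) (A2-A0)]
  have hw3 : bdot B (A3-A0) (C-A0) = t 0 * bdot B (A1-A0) (A3-A0)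
      + t 1 * bdot B (A2-A0) (A3-A0) + t 2 * bdot B (A3-A0) (A3-A0) := by
    rw [hsym (A3-A0) (C-A0), ← ht, bdot_add_left, bdot_add_left,
      bdot_smul_left, bdot_smul_left, bdot_smul_left]
  have hww : bdot B (C-A0) (C-A0) = t 0 * bdot B (A1-A0) (C-A0)
      + t 1 * bdot B (A2-A0) (C-A0) + t 2 * bdot B (A3-A0) (C-A0) := by
    nth_rewrite 1 [← ht]
    rw [bdot_add_left, bdot_add_left, bdot_smul_left, bdot_smul_left, bdot_smul_left]
  -- the three linear constraints and R, V in terms of the Gram entries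
  have hk1 : 2*(t 0 * bdot B (A1-A0) (A1-A0) + t 1 * bdot B (A1-A0) (A2-A0)
      + t 2 * bdot B (A1-A0) (A3-A0)) = bdot B (A1-A0) (A1-A0) := by
    rw [← hw1]; exact hc1
  have hk2 : 2*(t 0 * bdot B (A1-A0) (A2-A0) + t 1 * bdot B (A2-A0) (A2-A0)
      + t 2 * bdot B (A2-A0) (A3-A0)) = bdot B (A2-A0) (A2-A0) := by
    rw [← hw2]; exact hc2
  have hk3 : 2*(t 0 * bdot B (A1-A0) (A3-A0) + t 1 * bdot B (A2-A0) (A3-A0)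
      + t 2 * bdot B (A3-A0) (A3-A0)) = bdot B (A3-A0) (A3-A0) := by
    rw [← hw3]; exact hc3
  have hR2 : 2*R = t 0 * bdot B (A1-A0) (A1-A0) + t 1 * bdot B (A2-A0) (A2-A0)
      + t 2 * bdot B (A3-A0) (A3-A0) := by
    rw [hR, hCA0]
    linear_combination 2*hww + t 0 * hc1 + t 1 * hc2 + t 2 * hc3
  have hVg : V = 4*(bdot B (A1-A0) (A1-A0) * bdot B (A2-A0) (A2-A0) * bdot B (A3-A0) (A3-A0)
      + 2 * bdot B (A1-A0) (A2-A0) * bdot B (A1-A0) (A3-A0) * bdot B (A2-A0) (A3-A0)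
      - bdot B (A1-A0) (A1-A0) * bdot B (A2-A0) (A3-A0) ^ 2
      - bdot B (A2-A0) (A2-A0) * bdot B (A1-A0) (A3-A0) ^ 2
      - bdot B (A3-A0) (A3-A0) * bdot B (A1-A0) (A2-A0) ^ 2) := by
    rw [hV]
    unfold quadrume
    rw [Matrix.det_fin_three]
    simp only [Matrix.cons_val', Matrix.cons_val_zero, Matrix.cons_val_one, Matrix.head_cons,
      Matrix.empty_val', Matrix.cons_val_fin_one, Matrix.head_fin_const, Matrix.of_apply,
      Matrix.cons_val_two, Matrix.tail_cons]
    rw [hQ01, hQ02, hQ03, hQ12, hQ13, hQ23]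
    field_simp
    ring
  have key := key_identity (bdot B (A1-A0) (A1-A0)) (bdot B (A1-A0) (A2-A0))
    (bdot B (A1-A0) (A3-A0)) (bdot B (A2-A0) (A2-A0)) (bdot B (A2-A0) (A3-A0))
    (bdot B (A3-A0) (A3-A0)) (t 0) (t 1) (t 2) R V hk1 hk2 hk3 hR2 hVg
  have key' : archi (quadrance B A0 A1 * quadrance B A2 A3)
      (quadrance B A0 A2 * quadrance B A1 A3)
      (quadrance B A0 A3 * quadrance B A1 A2) = 4*V*R := by
    rw [hQ01, hQ02, hQ03, hQ12, hQ13, hQ23]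
    unfold archi at key ⊢
    linear_combination key
  -- assembling
  have e1 : E01 * E23 = 16*(quadrance B A0 A1 * quadrance B A2 A3)*V^2 /
      (quadrea B A0 A1 A2 * quadrea B A0 A1 A3 * quadrea B A0 A2 A3 * quadrea B A1 A2 A3) := by
    rw [hE01, hE23]; field_simp; ring
  have e2 : E02 * E13 = 16*(quadrance B A0 A2 * quadrance B A1 A3)*V^2 /
      (quadrea B A0 A1 A2 * quadrea B A0 A1 A3 * quadrea B A0 A2 A3 * quadrea B A1 A2 A3) := by
    rw [hE02, hE13]; field_simp; ring
  have e3 : E03 * E12 = 16*(quadrance B A0 A3 * quadrance B A1 A2)*V^2 /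
      (quadrea B A0 A1 A2 * quadrea B A0 A1 A3 * quadrea B A0 A2 A3 * quadrea B A1 A2 A3) := by
    rw [hE03, hE12]; field_simp; ring
  have hP : quadrea B A0 A1 A2 * quadrea B A0 A1 A3 * quadrea B A0 A2 A3 * quadrea B A1 A2 A3 ≠ 0 :=
    mul_ne_zero (mul_ne_zero (mul_ne_zero h012 h013) h023) h123
  rw [e1, e2, e3]
  exact assembly _ _ _ V R _ hP key'
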